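/- Let r ≥ 1 and define b : ℂʳ × ℝʳ → ℂ by b(z,x) = exp(−(1/2)(τ(x²) + τ(z²)) + √2·τ(zx)), where τ(z²) = Σ_{i=1}^r z_i², τ(x²) = Σ_{i=1}^r x_i², τ(zx) = Σ_{i=1}^r z_i x_i. Then b satisfies the intertwining differential equation −Σ_{i=1}^r ∂²b/∂z_i²(z,x) = (r/2)·b(z,x) + Σ_{i=1}^r x_i·∂b/∂x_i(z,x) − (1/2)·Σ_{i=1}^r ∂²b/∂x_i²(z,x) − (1/2)·τ(x²)·b(z,x) for all z ∈ ℂʳ, x ∈ ℝʳ; both sides equal (r − 2τ(x²) − τ(z²) + 2√2·τ(zx))·b(z,x). -/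

import Mathlib

/-!
The kernel factorizes as `b(z, x) = ∏ᵢ b₁(zᵢ, xᵢ)` with `b₁(ζ, ξ) = exp(-(ξ² + ζ²)/2 + √2 ζ ξ)`,
so along any coordinate line it is a constant multiple of a one-variable `b₁`. Since `b₁` is
symmetric in its two arguments, all derivatives reduce to `∂_ζ b₁ = (√2 ξ - ζ) b₁` and
`∂²_ζ b₁ = (-1 + (√2 ξ - ζ)²) b₁`. Summing over the coordinates and using `√2² = 2` gives the
common value `(r - 2τ(x²) - τ(z²) + 2√2 τ(zx)) b` of both sides.
-/

/-- The Bargmann kernel `b(z,x) = exp(−(1/2)(τ(x²)+τ(z²)) + √2·τ(zx))`. -/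
noncomputable def bker (r : ℕ) (z : Fin r → ℂ) (x : Fin r → ℝ) : ℂ :=
  Complex.exp (-(1/2 : ℂ) * ((∑ i, (x i : ℂ) ^ 2) + ∑ i, z i ^ 2) +
    (Real.sqrt 2 : ℂ) * ∑ i, z i * (x i : ℂ))

open Finset Function

noncomputable def bker₁ (ζ ξ : ℂ) : ℂ :=
  Complex.exp (-(1/2) * (ξ ^ 2 + ζ ^ 2) + √2 * ζ * ξ)

lemma bker₁_comm (ζ ξ : ℂ) : bker₁ ζ ξ = bker₁ ξ ζ := by
  unfold bker₁; ring_nf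

lemma hasDerivAt_bker₁ (ζ ξ : ℂ) :
    HasDerivAt (bker₁ · ξ) ((√2 * ξ - ζ) * bker₁ ζ ξ) ζ := by
  have h : HasDerivAt (fun w : ℂ => -(1/2) * (ξ ^ 2 + w ^ 2) + √2 * w * ξ) (√2 * ξ - ζ) ζ := by
    refine ((((hasDerivAt_pow 2 ζ).const_add (ξ ^ 2)).const_mul (-(1/2 : ℂ))).add
      (((hasDerivAt_id ζ).const_mul (√2 : ℂ)).mul_const ξ)).congr_deriv ?_
    push_cast
    ring
  simpa only [bker₁, mul_comm] using h.cexp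

lemma deriv_bker₁ (ξ : ℂ) : deriv (bker₁ · ξ) = fun ζ => (√2 * ξ - ζ) * bker₁ ζ ξ :=
  funext fun ζ => (hasDerivAt_bker₁ ζ ξ).deriv

lemma hasDerivAt_deriv_bker₁ (ζ ξ : ℂ) :
    HasDerivAt (deriv (bker₁ · ξ)) ((-1 + (√2 * ξ - ζ) ^ 2) * bker₁ ζ ξ) ζ := by
  rw [deriv_bker₁]
  exact (((hasDerivAt_id ζ).const_sub (√2 * ξ : ℂ)).mul (hasDerivAt_bker₁ ζ ξ)).congr_deriv
    (by simp only [id]; ring)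

lemma differentiable_bker₁ (ξ : ℂ) : Differentiable ℂ (bker₁ · ξ) :=
  fun ζ => (hasDerivAt_bker₁ ζ ξ).differentiableAt

lemma differentiable_deriv_bker₁ (ξ : ℂ) : Differentiable ℂ (deriv (bker₁ · ξ)) :=
  fun ζ => (hasDerivAt_deriv_bker₁ ζ ξ).differentiableAt

lemma deriv_comp_ofReal {g : ℂ → ℂ} (hg : Differentiable ℂ g) :
    deriv (fun t : ℝ => g t) = fun t : ℝ => deriv g (t : ℂ) :=
  funext fun t => (hg (t : ℂ)).hasDerivAt.comp_ofReal.deriv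

lemma prod_apply_update_eq_prod_erase_mul {ι α M : Type*} [Fintype ι] [DecidableEq ι]
    [CommMonoid M] (g : ι → α → M) (z : ι → α) (i : ι) (w : α) :
    ∏ j, g j (update z i w j) = (∏ j ∈ univ.erase i, g j (z j)) * g i w := by
  rw [← prod_erase_mul _ _ (mem_univ i), update_self]
  congr 1
  exact prod_congr rfl fun j hj => by rw [update_of_ne (ne_of_mem_erase hj)]

section Slices

variable (r : ℕ) (z : Fin r → ℂ) (x : Fin r → ℝ) (i : Fin r)

lemma bker_eq_prod :
    bker r z x = ∏ i, bker₁ (z i) (x i) := by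
  simp only [bker, bker₁]
  rw [← Complex.exp_sum]
  congr 1
  simp only [mul_add, sum_add_distrib, mul_sum]
  ring_nf

lemma bker_update_left :
    (fun w => bker r (update z i w) x) =
      fun w => (∏ j ∈ univ.erase i, bker₁ (z j) (x j)) * bker₁ w (x i) := by
  funext w
  rw [bker_eq_prod, prod_apply_update_eq_prod_erase_mul (fun j v => bker₁ v (x j))]

lemma bker_update_right :
    (fun w : ℝ => bker r z (update x i w)) =
      fun w : ℝ => (∏ j ∈ univ.erase i, bker₁ (z j) (x j)) * bker₁ w (z i) := by
  funext w
  rw [bker_eq_prod, prod_apply_update_eq_prod_erase_mul (fun j (v : ℝ) => bker₁ (z j) v),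
    bker₁_comm]

lemma deriv_deriv_bker_update_left :
    deriv (deriv fun w => bker r (update z i w) x) (z i) =
      (-1 + (√2 * x i - z i) ^ 2) * bker r z x := by
  rw [bker_update_left, deriv_const_mul_field', deriv_const_mul_field']
  beta_reduce
  rw [(hasDerivAt_deriv_bker₁ _ _).deriv, bker_eq_prod, ← prod_erase_mul _ _ (mem_univ i)]
  ring

lemma deriv_bker_update_right :
    deriv (fun w : ℝ => bker r z (update x i w)) (x i) =
      (√2 * z i - x i) * bker r z x := by
  rw [bker_update_right, deriv_comp_ofReal ((differentiable_bker₁ (z i)).const_mul _),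
    deriv_const_mul_field', deriv_bker₁, bker_eq_prod, ← prod_erase_mul _ _ (mem_univ i),
    bker₁_comm]
  ring

lemma deriv_deriv_bker_update_right :
    deriv (deriv fun w : ℝ => bker r z (update x i w)) (x i) =
      (-1 + (√2 * z i - x i) ^ 2) * bker r z x := by
  rw [bker_update_right, deriv_comp_ofReal ((differentiable_bker₁ (z i)).const_mul _),
    deriv_const_mul_field',
    deriv_comp_ofReal ((differentiable_deriv_bker₁ (z i)).const_mul _),
    deriv_const_mul_field']
  beta_reduce
  rw [(hasDerivAt_deriv_bker₁ _ _).deriv, bker_eq_prod,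
    ← prod_erase_mul _ _ (mem_univ i), bker₁_comm]
  ring

end Slices

lemma sum_neg_one_add_sqrt_two_mul_sub_sq {ι : Type*} [Fintype ι] (u v : ι → ℂ) :
    ∑ i, (-1 + (√2 * u i - v i) ^ 2) =
      2 * ∑ i, u i ^ 2 - 2 * √2 * ∑ i, v i * u i + ∑ i, v i ^ 2 - Fintype.card ι := by
  have hsqrt : ((√2 : ℝ) : ℂ) ^ 2 = 2 := by norm_cast; exact Real.sq_sqrt zero_le_two
  have hterm : ∀ i, -1 + (√2 * u i - v i) ^ 2 =
      2 * u i ^ 2 - 2 * √2 * (v i * u i) + v i ^ 2 - 1 := fun i => by linear_combination u i ^ 2 * hsqrt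
  simp only [hterm, sum_sub_distrib, sum_add_distrib, ← mul_sum, sum_const, card_univ,
    nsmul_eq_mul, mul_one]

theorem bargmann_kernel_intertwining_general (r : ℕ)
    (z : Fin r → ℂ) (x : Fin r → ℝ) :
    (-∑ i, deriv (deriv (fun w => bker r (Function.update z i w) x)) (z i) =
      ((r : ℂ) / 2) * bker r z x +
        ∑ i, (x i : ℂ) * deriv (fun w : ℝ => bker r z (Function.update x i w)) (x i) -
        (1/2 : ℂ) * ∑ i, deriv (deriv (fun w : ℝ => bker r z (Function.update x i w))) (x i) -
        (1/2 : ℂ) * (∑ i, (x i : ℂ) ^ 2) * bker r z x) ∧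
    -∑ i, deriv (deriv (fun w => bker r (Function.update z i w) x)) (z i) =
      ((r : ℂ) - 2 * ∑ i, (x i : ℂ) ^ 2 - ∑ i, z i ^ 2 +
        2 * (Real.sqrt 2 : ℂ) * ∑ i, z i * (x i : ℂ)) * bker r z x := by
  have hzx : ∑ i, (x i : ℂ) * z i = ∑ i, z i * x i := sum_congr rfl fun i _ => mul_comm _ _
  have hx1 : ∑ i, (x i : ℂ) * ((√2 * z i - x i) * bker r z x) =
      (√2 * ∑ i, z i * x i - ∑ i, (x i : ℂ) ^ 2) * bker r z x :=
    calc _ = ∑ i, (√2 * (z i * x i) - (x i : ℂ) ^ 2) * bker r z x :=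
          sum_congr rfl fun i _ => by ring
      _ = _ := by rw [← sum_mul, sum_sub_distrib, ← mul_sum]
  simp only [deriv_deriv_bker_update_left, deriv_bker_update_right,
    deriv_deriv_bker_update_right, ← sum_mul, sum_neg_one_add_sqrt_two_mul_sub_sq, hzx, hx1,
    Fintype.card_fin]
  constructor <;> ring

/-- the Bargmann kernel satisfies the intertwining differential equation
`−Σᵢ ∂²b/∂z_i² = (r/2)·b + Σᵢ x_i·∂b/∂x_i − (1/2)·Σᵢ ∂²b/∂x_i² − (1/2)·τ(x²)·b`,
both sides being equal to `(r − 2τ(x²) − τ(z²) + 2√2·τ(zx))·b`. -/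
theorem bargmann_kernel_intertwining (r : ℕ) (hr : 1 ≤ r)
    (z : Fin r → ℂ) (x : Fin r → ℝ) :
    (-∑ i, deriv (deriv (fun w => bker r (Function.update z i w) x)) (z i) =
      ((r : ℂ) / 2) * bker r z x +
        ∑ i, (x i : ℂ) * deriv (fun w : ℝ => bker r z (Function.update x i w)) (x i) -
        (1/2 : ℂ) * ∑ i, deriv (deriv (fun w : ℝ => bker r z (Function.update x i w))) (x i) -
        (1/2 : ℂ) * (∑ i, (x i : ℂ) ^ 2) * bker r z x) ∧
    -∑ i, deriv (deriv (fun w => bker r (Function.update z i w) x)) (z i) =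
      ((r : ℂ) - 2 * ∑ i, (x i : ℂ) ^ 2 - ∑ i, z i ^ 2 +
        2 * (Real.sqrt 2 : ℂ) * ∑ i, z i * (x i : ℂ)) * bker r z x :=
  bargmann_kernel_intertwining_general r z x
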